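/- Let n ≥ 2, let ϱ ≥ 1 be an integer and ς² > 0, and let γ_1, …, γ_n be i.i.d. Gamma(ϱ, ς²) random variables. Let F_ϱ denote the CDF of the Gamma(ϱ, 1) distribution and F_ϱ^{−1} its inverse on (0, 1). Then for every z ≥ 1, P(γ_n / γ_(1) > z) = (n−1) ∫₀¹ (1 − F_ϱ( z · F_ϱ^{−1}(1 − w) )) w^{n−2} dw; in particular this probability does not depend on the scale parameter ς². -/

import Mathlib

/-!
For `z ≥ 1` the event `γ_n / γ_(1) > z` coincides almost surely with `γ_n > z M`, where `M` is the
minimum of the other `n - 1` variables: if `γ_n` is itself the minimum the ratio is `1 ≤ z`.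
`M` is independent of `γ_n` and, with `S x = 1 - F_ϱ (x / ς²)` the common survival function and
`p` the common density, has survival function `S^(n-1)` and density `(n - 1) S^(n-2) p`.
Conditioning on `M` gives `P = ∫ (n - 1) S(x)^(n-2) p(x) S(z x) dx`, and the substitution
`w = S x` turns this into the stated integral, in which `ς²` no longer occurs.
-/

open MeasureTheory ProbabilityTheory Set

/-- The density of the Gamma distribution with integer shape `ϱ ≥ 1` and scale `s = ς² > 0`:
`u ↦ u^(ϱ-1) exp(-u/s) / (s^ϱ (ϱ-1)!)` on `(0, ∞)`. -/
noncomputable def gammaIntPdf (ϱ : ℕ) (s u : ℝ) : ℝ :=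
  if 0 < u then u ^ (ϱ - 1) * Real.exp (-u / s) / (s ^ ϱ * (Nat.factorial (ϱ - 1))) else 0

/-- The Gamma distribution with integer shape `ϱ ≥ 1` and scale `s = ς² > 0`. -/
noncomputable def gammaIntMeasure (ϱ : ℕ) (s : ℝ) : Measure ℝ :=
  MeasureTheory.volume.withDensity fun u => ENNReal.ofReal (gammaIntPdf ϱ s u)

open Filter Topology

lemma lintegral_Ioi_ofReal_deriv_of_nonneg {g g' : ℝ → ℝ} {a l : ℝ}
    (hderiv : ∀ x ∈ Ici a, HasDerivAt g (g' x) x) (hg' : ∀ x ∈ Ioi a, 0 ≤ g' x)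
    (hg : Tendsto g atTop (𝓝 l)) :
    ∫⁻ x in Ioi a, ENNReal.ofReal (g' x) = ENNReal.ofReal (l - g a) := by
  rw [← ofReal_integral_eq_lintegral_ofReal (integrableOn_Ioi_deriv_of_nonneg' hderiv hg' hg)
    (ae_restrict_of_forall_mem measurableSet_Ioi hg'),
    integral_Ioi_of_hasDerivAt_of_nonneg' hderiv hg' hg]

lemma withDensity_ofReal_Iic_zero {p : ℝ → ℝ} (hp : ∀ x ≤ 0, p x = 0) :
    volume.withDensity (fun x => ENNReal.ofReal (p x)) (Iic 0) = 0 := by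
  rw [withDensity_apply _ measurableSet_Iic]
  exact (setLIntegral_congr_fun measurableSet_Iic fun x hx => by
    rw [hp x hx, ENNReal.ofReal_zero]).trans lintegral_zero

lemma Finset.measurable_inf' {α δ ι : Type*} [MeasurableSpace α] [MeasurableSpace δ]
    [SemilatticeInf α] [MeasurableInf₂ α] {J : Finset ι} (hJ : J.Nonempty) {f : ι → δ → α}
    (hf : ∀ i ∈ J, Measurable (f i)) : Measurable (J.inf' hJ f) :=
  Finset.inf'_induction hJ _ (fun _ hf _ hg => hf.inf hg) hf

lemma MeasureTheory.Measure.ext_of_Ioi_of_nonneg {μ ν : Measure ℝ} [IsProbabilityMeasure μ]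
    [IsProbabilityMeasure ν] (h : ∀ t, 0 ≤ t → μ (Ioi t) = ν (Ioi t)) (h0 : μ (Ioi 0) = 1) :
    μ = ν := by
  have hneg (ρ : Measure ℝ) [IsProbabilityMeasure ρ] (hρ : ρ (Ioi 0) = 1) {t : ℝ} (ht : t < 0) :
      ρ (Ioi t) = 1 :=
    le_antisymm prob_le_one (hρ ▸ measure_mono (Ioi_subset_Ioi ht.le))
  have hIoi (t : ℝ) : μ (Ioi t) = ν (Ioi t) := by
    rcases le_or_gt 0 t with ht | ht
    · exact h t ht
    · rw [hneg μ h0 ht, hneg ν (h 0 le_rfl ▸ h0) ht]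
  refine Measure.ext_of_Iic μ ν fun a => ?_
  rw [← compl_Ioi, prob_compl_eq_one_sub measurableSet_Ioi, prob_compl_eq_one_sub measurableSet_Ioi,
    hIoi]

namespace ProbabilityTheory

variable {Ω ι : Type*} [MeasurableSpace Ω] {μ : Measure Ω}

lemma IndepFun.measure_mul_lt_eq_lintegral [IsFiniteMeasure μ] {X Y : Ω → ℝ}
    (hXY : IndepFun X Y μ) (hX : Measurable X) (hY : Measurable Y) (z : ℝ) :
    μ {ω | z * X ω < Y ω} = ∫⁻ x, μ.map Y (Ioi (z * x)) ∂μ.map X := by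
  have hset : MeasurableSet {p : ℝ × ℝ | z * p.1 < p.2} :=
    measurableSet_lt (measurable_fst.const_mul z) measurable_snd
  calc μ {ω | z * X ω < Y ω} = μ.map (fun ω => (X ω, Y ω)) {p | z * p.1 < p.2} := by
        rw [Measure.map_apply (hX.prodMk hY) hset]; rfl
    _ = ((μ.map X).prod (μ.map Y)) {p | z * p.1 < p.2} := by
        rw [hXY.map_prod_eq_prod_map_map hX.aemeasurable hY.aemeasurable]
    _ = _ := Measure.prod_apply hset

lemma iIndepFun.indepFun_finset_inf'_of_notMem {β : Type*} [MeasurableSpace β] [SemilatticeInf β]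
    [MeasurableInf₂ β] {f : ι → Ω → β} (hf : iIndepFun f μ) (hm : ∀ i, Measurable (f i))
    {J : Finset ι} (hJ : J.Nonempty) {i : ι} (hi : i ∉ J) :
    IndepFun (J.inf' hJ f) (f i) μ := by
  have hJ' : (Finset.univ : Finset J).Nonempty := Finset.univ_nonempty_iff.2 hJ.to_subtype
  have h_left : J.inf' hJ f =
      Finset.univ.inf' hJ' (fun (j : J) (p : J → β) => p j) ∘ fun ω (j : J) => f j ω := by
    ext ω
    rw [Function.comp_apply, Finset.inf'_apply, Finset.inf'_apply]
    exact (Finset.inf'_congr hJ Finset.attach_map_val.symm fun _ _ => rfl).trans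
      (Finset.inf'_map (f := Function.Embedding.subtype (· ∈ J)) _ (by simpa using hJ))
  have h_meas_left : Measurable (Finset.univ.inf' hJ' fun (j : J) (p : J → β) => p j) :=
    Finset.measurable_inf' hJ' fun j _ => measurable_pi_apply j
  have h_right : f i = (fun p : ({i} : Finset ι) → β => p ⟨i, Finset.mem_singleton_self i⟩) ∘
      fun ω (j : ({i} : Finset ι)) => f j ω := rfl
  rw [h_left, h_right]
  exact (hf.indepFun_finset J {i} (Finset.disjoint_singleton_right.2 hi) hm).comp h_meas_left
    (measurable_pi_apply _)

lemma iIndepFun.map_inf'_Ioi {f : ι → Ω → ℝ} (hf : iIndepFun f μ) (hm : ∀ i, Measurable (f i))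
    {J : Finset ι} (hJ : J.Nonempty) (t : ℝ) :
    μ.map (J.inf' hJ f) (Ioi t) = ∏ i ∈ J, μ.map (f i) (Ioi t) := by
  have hset : J.inf' hJ f ⁻¹' Ioi t = ⋂ i ∈ J, f i ⁻¹' Ioi t := by
    ext ω
    simp [Finset.inf'_apply]
  simp_rw [Measure.map_apply (Finset.measurable_inf' hJ fun i _ => hm i) measurableSet_Ioi,
    Measure.map_apply (hm _) measurableSet_Ioi,
    hset, hf.measure_inter_preimage_eq_mul J fun _ _ => measurableSet_Ioi]

end ProbabilityTheory

noncomputable def stdGammaPdf (ϱ : ℕ) (t : ℝ) : ℝ :=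
  t ^ (ϱ - 1) * Real.exp (-t) / (ϱ - 1).factorial

noncomputable def stdGammaCdf (ϱ : ℕ) (x : ℝ) : ℝ :=
  ∫ t in (0 : ℝ)..x, stdGammaPdf ϱ t

section StdGamma

variable {ϱ : ℕ}

lemma stdGammaCdf_eq_one_div_factorial_mul (ϱ : ℕ) (x : ℝ) :
    stdGammaCdf ϱ x = (1 / ((ϱ - 1).factorial : ℝ)) *
      ∫ t in (0 : ℝ)..x, t ^ (ϱ - 1) * Real.exp (-t) := by
  simp only [stdGammaCdf, stdGammaPdf, intervalIntegral.integral_div, one_div_mul_eq_div]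

lemma continuous_stdGammaPdf : Continuous (stdGammaPdf ϱ) := by
  unfold stdGammaPdf; fun_prop

lemma stdGammaPdf_pos {t : ℝ} (ht : 0 < t) : 0 < stdGammaPdf ϱ t := by
  unfold stdGammaPdf; positivity

lemma stdGammaPdf_nonneg {t : ℝ} (ht : 0 ≤ t) : 0 ≤ stdGammaPdf ϱ t := by
  unfold stdGammaPdf; positivity

lemma stdGammaPdf_eq_rpow (hϱ : 1 ≤ ϱ) :
    stdGammaPdf ϱ = fun t => Real.exp (-t) * t ^ ((ϱ : ℝ) - 1) / (ϱ - 1).factorial := by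
  funext t
  simp only [stdGammaPdf]
  rw [mul_comm (t ^ _), ← Real.rpow_natCast, Nat.cast_sub hϱ, Nat.cast_one]

lemma integrableOn_stdGammaPdf_Ioi (hϱ : 1 ≤ ϱ) : IntegrableOn (stdGammaPdf ϱ) (Ioi 0) := by
  rw [stdGammaPdf_eq_rpow hϱ]
  exact (Real.GammaIntegral_convergent (by exact_mod_cast hϱ)).div_const _

lemma integral_stdGammaPdf_Ioi_zero (hϱ : 1 ≤ ϱ) : ∫ t in Ioi 0, stdGammaPdf ϱ t = 1 := by
  have hΓ : Real.Gamma ϱ = (ϱ - 1).factorial := by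
    rw [← Real.Gamma_nat_eq_factorial, Nat.cast_sub hϱ, Nat.cast_one, sub_add_cancel]
  rw [stdGammaPdf_eq_rpow hϱ, integral_div, ← Real.Gamma_eq_integral (by exact_mod_cast hϱ), hΓ,
    div_self (by positivity)]

lemma hasDerivAt_stdGammaCdf (x : ℝ) : HasDerivAt (stdGammaCdf ϱ) (stdGammaPdf ϱ x) x :=
  (continuous_stdGammaPdf.integral_hasStrictDerivAt 0 x).hasDerivAt

lemma continuous_stdGammaCdf : Continuous (stdGammaCdf ϱ) :=
  continuous_iff_continuousAt.2 fun x => (hasDerivAt_stdGammaCdf x).continuousAt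

@[simp]
lemma stdGammaCdf_zero : stdGammaCdf ϱ 0 = 0 := intervalIntegral.integral_same

lemma strictMonoOn_stdGammaCdf : StrictMonoOn (stdGammaCdf ϱ) (Ici 0) := by
  refine strictMonoOn_of_deriv_pos (convex_Ici 0) continuous_stdGammaCdf.continuousOn fun x hx => ?_
  rw [(hasDerivAt_stdGammaCdf x).deriv]
  exact stdGammaPdf_pos (by simpa using hx)

lemma tendsto_stdGammaCdf_atTop (hϱ : 1 ≤ ϱ) : Tendsto (stdGammaCdf ϱ) atTop (𝓝 1) := by
  rw [← integral_stdGammaPdf_Ioi_zero hϱ]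
  exact intervalIntegral_tendsto_integral_Ioi 0 (integrableOn_stdGammaPdf_Ioi hϱ) tendsto_id

lemma stdGammaCdf_le_one (hϱ : 1 ≤ ϱ) {x : ℝ} (hx : 0 ≤ x) : stdGammaCdf ϱ x ≤ 1 :=
  ge_of_tendsto (tendsto_stdGammaCdf_atTop hϱ) <| (eventually_ge_atTop x).mono fun _ hy =>
    strictMonoOn_stdGammaCdf.monotoneOn hx (hx.trans hy) hy

lemma stdGammaCdf_mem_Ioo (hϱ : 1 ≤ ϱ) {x : ℝ} (hx : 0 < x) : stdGammaCdf ϱ x ∈ Ioo 0 1 := by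
  have hmono := strictMonoOn_stdGammaCdf (ϱ := ϱ)
  refine ⟨?_, ?_⟩
  · simpa using hmono self_mem_Ici hx.le hx
  · exact (hmono hx.le (by simp; linarith) (lt_add_one x)).trans_le
      (stdGammaCdf_le_one hϱ (by linarith))

lemma stdGammaCdf_image_Ioi (hϱ : 1 ≤ ϱ) : stdGammaCdf ϱ '' Ioi 0 = Ioo 0 1 := by
  refine Subset.antisymm (image_subset_iff.2 fun x hx => stdGammaCdf_mem_Ioo hϱ hx) fun w hw => ?_
  obtain ⟨b, hb, hwb⟩ := ((eventually_ge_atTop 0).and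
    ((tendsto_stdGammaCdf_atTop hϱ).eventually (lt_mem_nhds hw.2))).exists
  obtain ⟨x, hx, rfl⟩ := intermediate_value_Ioo hb continuous_stdGammaCdf.continuousOn
    (by simpa using ⟨hw.1, hwb⟩ : w ∈ Ioo (stdGammaCdf ϱ 0) (stdGammaCdf ϱ b))
  exact ⟨x, hx.1, rfl⟩

end StdGamma

section ScaledGamma

variable {ϱ : ℕ} {s : ℝ}

lemma hasDerivAt_stdGammaCdf_div (s x : ℝ) :
    HasDerivAt (fun u => stdGammaCdf ϱ (u / s)) (stdGammaPdf ϱ (x / s) / s) x := by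
  have h := (hasDerivAt_stdGammaCdf (ϱ := ϱ) (x / s)).comp x ((hasDerivAt_id' x).div_const s)
  rwa [mul_one_div] at h

lemma tendsto_stdGammaCdf_div_atTop (hϱ : 1 ≤ ϱ) (hs : 0 < s) :
    Tendsto (fun u => stdGammaCdf ϱ (u / s)) atTop (𝓝 1) :=
  (tendsto_stdGammaCdf_atTop hϱ).comp (tendsto_id.atTop_div_const hs)

lemma gammaIntPdf_of_pos (hϱ : 1 ≤ ϱ) (hs : 0 < s) {u : ℝ} (hu : 0 < u) :
    gammaIntPdf ϱ s u = stdGammaPdf ϱ (u / s) / s := by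
  obtain ⟨m, rfl⟩ : ∃ m, ϱ = m + 1 := ⟨ϱ - 1, by omega⟩
  rw [gammaIntPdf, if_pos hu, stdGammaPdf, Nat.add_sub_cancel, pow_succ, div_pow, neg_div]
  field_simp

lemma gammaIntMeasure_Ioi (hϱ : 1 ≤ ϱ) (hs : 0 < s) {t : ℝ} (ht : 0 ≤ t) :
    gammaIntMeasure ϱ s (Ioi t) = ENNReal.ofReal (1 - stdGammaCdf ϱ (t / s)) := by
  rw [gammaIntMeasure, withDensity_apply _ measurableSet_Ioi, setLIntegral_congr_fun
    measurableSet_Ioi fun u hu => by rw [gammaIntPdf_of_pos hϱ hs (ht.trans_lt hu)]]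
  exact lintegral_Ioi_ofReal_deriv_of_nonneg (fun x _ => hasDerivAt_stdGammaCdf_div s x)
    (fun x hx => div_nonneg (stdGammaPdf_nonneg (div_pos (ht.trans_lt hx) hs).le) hs.le)
    (tendsto_stdGammaCdf_div_atTop hϱ hs)

lemma gammaIntMeasure_Iic_zero : gammaIntMeasure ϱ s (Iic 0) = 0 :=
  withDensity_ofReal_Iic_zero fun _ hx => if_neg hx.not_gt

lemma ae_pos_gammaIntMeasure : ∀ᵐ x ∂gammaIntMeasure ϱ s, 0 < x :=
  (measure_eq_zero_iff_ae_notMem.1 gammaIntMeasure_Iic_zero).mono fun _ hx => not_le.1 hx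

end ScaledGamma

noncomputable def gammaMinPdf (ϱ k : ℕ) (s x : ℝ) : ℝ :=
  k * (1 - stdGammaCdf ϱ (x / s)) ^ (k - 1) * gammaIntPdf ϱ s x

noncomputable def gammaMinMeasure (ϱ k : ℕ) (s : ℝ) : Measure ℝ :=
  volume.withDensity fun x => ENNReal.ofReal (gammaMinPdf ϱ k s x)

section GammaMin

variable {ϱ k : ℕ} {s : ℝ}

lemma gammaMinPdf_of_pos (hϱ : 1 ≤ ϱ) (hs : 0 < s) {x : ℝ} (hx : 0 < x) :
    gammaMinPdf ϱ k s x =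
      k * (1 - stdGammaCdf ϱ (x / s)) ^ (k - 1) * (stdGammaPdf ϱ (x / s) / s) := by
  rw [gammaMinPdf, gammaIntPdf_of_pos hϱ hs hx]

lemma gammaMinPdf_nonneg (hϱ : 1 ≤ ϱ) (hs : 0 < s) (x : ℝ) : 0 ≤ gammaMinPdf ϱ k s x := by
  rcases le_or_gt x 0 with hx | hx
  · simp [gammaMinPdf, gammaIntPdf, hx.not_gt]
  · have hF := stdGammaCdf_le_one hϱ (div_pos hx hs).le
    have hf := stdGammaPdf_nonneg (ϱ := ϱ) (div_pos hx hs).le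
    rw [gammaMinPdf_of_pos hϱ hs hx]
    exact mul_nonneg (mul_nonneg k.cast_nonneg (pow_nonneg (sub_nonneg.2 hF) _))
      (div_nonneg hf hs.le)

lemma measurable_gammaMinPdf : Measurable (gammaMinPdf ϱ k s) := by
  have : Measurable (gammaIntPdf ϱ s) :=
    Measurable.ite measurableSet_Ioi (by fun_prop) measurable_const
  have := continuous_stdGammaCdf (ϱ := ϱ)
  unfold gammaMinPdf
  fun_prop

lemma gammaMinMeasure_Ioi (hϱ : 1 ≤ ϱ) (hk : 1 ≤ k) (hs : 0 < s) {t : ℝ} (ht : 0 ≤ t) :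
    gammaMinMeasure ϱ k s (Ioi t) = ENNReal.ofReal ((1 - stdGammaCdf ϱ (t / s)) ^ k) := by
  have hderiv (x : ℝ) : HasDerivAt (fun u => -(1 - stdGammaCdf ϱ (u / s)) ^ k)
      (k * (1 - stdGammaCdf ϱ (x / s)) ^ (k - 1) * (stdGammaPdf ϱ (x / s) / s)) x :=
    (((hasDerivAt_stdGammaCdf_div s x).const_sub 1).pow k).neg.congr_deriv (by ring)
  have hlim : Tendsto (fun u => -(1 - stdGammaCdf ϱ (u / s)) ^ k) atTop (𝓝 0) := by
    simpa [zero_pow (Nat.one_le_iff_ne_zero.1 hk)] using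
      (((tendsto_stdGammaCdf_div_atTop hϱ hs).const_sub 1).pow k).neg
  rw [gammaMinMeasure, withDensity_apply _ measurableSet_Ioi, setLIntegral_congr_fun
    measurableSet_Ioi fun x hx => by rw [gammaMinPdf_of_pos hϱ hs (ht.trans_lt hx)],
    lintegral_Ioi_ofReal_deriv_of_nonneg (fun x _ => hderiv x) (fun x hx => ?_) hlim, zero_sub,
    neg_neg]
  rw [← gammaMinPdf_of_pos hϱ hs (ht.trans_lt hx)]
  exact gammaMinPdf_nonneg hϱ hs x

lemma gammaMinMeasure_Iic_zero : gammaMinMeasure ϱ k s (Iic 0) = 0 :=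
  withDensity_ofReal_Iic_zero fun _ hx => by simp [gammaMinPdf, gammaIntPdf, hx.not_gt]

lemma isProbabilityMeasure_gammaMinMeasure (hϱ : 1 ≤ ϱ) (hk : 1 ≤ k) (hs : 0 < s) :
    IsProbabilityMeasure (gammaMinMeasure ϱ k s) := by
  constructor
  rw [← Iic_union_Ioi (a := 0), measure_union (Iic_disjoint_Ioi le_rfl) measurableSet_Ioi,
    gammaMinMeasure_Iic_zero, gammaMinMeasure_Ioi hϱ hk hs le_rfl]
  simp

end GammaMin

lemma map_inf'_eq_gammaMinMeasure {Ω ι : Type*} [MeasurableSpace Ω] {μ : Measure Ω}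
    [IsProbabilityMeasure μ] {ϱ : ℕ} (hϱ : 1 ≤ ϱ) {s : ℝ} (hs : 0 < s) {γ : ι → Ω → ℝ}
    (hm : ∀ i, Measurable (γ i)) (hindep : iIndepFun γ μ)
    (hlaw : ∀ i, μ.map (γ i) = gammaIntMeasure ϱ s) {J : Finset ι} (hJ : J.Nonempty) :
    μ.map (J.inf' hJ γ) = gammaMinMeasure ϱ J.card s := by
  have hk : 1 ≤ J.card := hJ.card_pos
  have := Measure.isProbabilityMeasure_map (μ := μ)
    (Finset.measurable_inf' hJ fun i _ => hm i).aemeasurable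
  have := isProbabilityMeasure_gammaMinMeasure hϱ hk hs
  have hIoi {t : ℝ} (ht : 0 ≤ t) :
      μ.map (J.inf' hJ γ) (Ioi t) = ENNReal.ofReal ((1 - stdGammaCdf ϱ (t / s)) ^ J.card) := by
    rw [hindep.map_inf'_Ioi hm hJ, Finset.prod_congr rfl fun i _ => by rw [hlaw i],
      Finset.prod_const, gammaIntMeasure_Ioi hϱ hs ht, ENNReal.ofReal_pow
        (sub_nonneg.2 (stdGammaCdf_le_one hϱ (div_nonneg ht hs.le)))]
  refine Measure.ext_of_Ioi_of_nonneg (fun t ht => ?_) ?_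
  · rw [hIoi ht, gammaMinMeasure_Ioi hϱ hk hs ht]
  · simp [hIoi le_rfl]

lemma lt_div_iInf_iff_mul_inf'_erase_lt {ι : Type*} [Fintype ι] [DecidableEq ι] {a : ι → ℝ}
    (ha : ∀ i, 0 < a i) (N : ι) (hN : (Finset.univ.erase N).Nonempty) {z : ℝ} (hz : 1 ≤ z) :
    z < a N / ⨅ i, a i ↔ z * (Finset.univ.erase N).inf' hN a < a N := by
  set m := (Finset.univ.erase N).inf' hN a
  have hm : 0 < m := (Finset.lt_inf'_iff hN).2 fun i _ => ha i
  have hinf : ⨅ i, a i = min (a N) m := by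
    have : Nonempty ι := ⟨N⟩
    rw [← Finset.inf'_univ_eq_ciInf, ← Finset.inf'_insert]
    exact Finset.inf'_congr _ (Finset.insert_erase (Finset.mem_univ N)).symm fun _ _ => rfl
  rw [hinf, lt_div_iff₀ (lt_min (ha N) hm)]
  rcases min_cases (a N) m with ⟨h, hle⟩ | ⟨h, hlt⟩
  · rw [h]; constructor <;> intro <;> nlinarith [ha N]
  · rw [h]

section Integrals

variable {ϱ k : ℕ} {s : ℝ}

lemma image_one_sub_stdGammaCdf_div_Ioi (hϱ : 1 ≤ ϱ) (hs : 0 < s) :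
    (fun x => 1 - stdGammaCdf ϱ (x / s)) '' Ioi 0 = Ioo 0 1 := by
  ext w
  constructor
  · rintro ⟨x, hx, rfl⟩
    have := stdGammaCdf_mem_Ioo hϱ (div_pos hx hs)
    constructor <;> linarith [this.1, this.2]
  · intro hw
    obtain ⟨v, hv, hFv⟩ : 1 - w ∈ stdGammaCdf ϱ '' Ioi 0 := by
      rw [stdGammaCdf_image_Ioi hϱ]
      constructor <;> linarith [hw.1, hw.2]
    exact ⟨v * s, mul_pos hv hs, by simp [mul_div_cancel_right₀ v hs.ne', hFv]⟩

lemma integral_Ioo_zero_one_eq_integral_Ioi (hϱ : 1 ≤ ϱ) (hs : 0 < s) (h : ℝ → ℝ) :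
    ∫ w in Ioo 0 1, h w =
      ∫ x in Ioi 0, stdGammaPdf ϱ (x / s) / s * h (1 - stdGammaCdf ϱ (x / s)) := by
  have hmono : StrictMonoOn (fun x => stdGammaCdf ϱ (x / s)) (Ioi 0) := fun a ha b hb hab =>
    strictMonoOn_stdGammaCdf (div_pos ha hs).le (div_pos hb hs).le (div_lt_div_of_pos_right hab hs)
  rw [← image_one_sub_stdGammaCdf_div_Ioi hϱ hs, integral_image_eq_integral_abs_deriv_smul
    measurableSet_Ioi (fun x _ => ((hasDerivAt_stdGammaCdf_div s x).const_sub 1).hasDerivWithinAt)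
    (fun a ha b hb hab => hmono.injOn ha hb (sub_right_injective hab))]
  refine setIntegral_congr_fun measurableSet_Ioi fun x hx => ?_
  rw [abs_neg, abs_of_nonneg (div_nonneg (stdGammaPdf_nonneg (div_pos hx hs).le) hs.le),
    smul_eq_mul]

lemma integral_gammaMinPdf_mul_eq (hϱ : 1 ≤ ϱ) (hs : 0 < s) {Finv : ℝ → ℝ}
    (hFinv : ∀ w ∈ Ioo (0 : ℝ) 1, 0 < Finv w ∧ stdGammaCdf ϱ (Finv w) = w) (z : ℝ) :
    ∫ x in Ioi 0, gammaMinPdf ϱ k s x * (1 - stdGammaCdf ϱ (z * x / s)) =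
      k * ∫ w in Ioo 0 1, (1 - stdGammaCdf ϱ (z * Finv (1 - w))) * w ^ (k - 1) := by
  rw [integral_Ioo_zero_one_eq_integral_Ioi hϱ hs, ← integral_const_mul]
  refine setIntegral_congr_fun measurableSet_Ioi fun x hx => ?_
  have hxs : 0 < x / s := div_pos hx hs
  obtain ⟨hpos, hF⟩ := hFinv _ (stdGammaCdf_mem_Ioo hϱ hxs)
  have hinv : Finv (stdGammaCdf ϱ (x / s)) = x / s :=
    strictMonoOn_stdGammaCdf.injOn hpos.le hxs.le hF
  simp only [sub_sub_cancel, hinv, gammaMinPdf_of_pos hϱ hs hx, mul_div_assoc]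
  ring

lemma toReal_lintegral_gammaIntMeasure_Ioi_mul (hϱ : 1 ≤ ϱ) (hs : 0 < s) {z : ℝ} (hz : 0 ≤ z) :
    (∫⁻ x, gammaIntMeasure ϱ s (Ioi (z * x)) ∂gammaMinMeasure ϱ k s).toReal =
      ∫ x in Ioi 0, gammaMinPdf ϱ k s x * (1 - stdGammaCdf ϱ (z * x / s)) := by
  have hsurv : Measurable fun x => gammaIntMeasure ϱ s (Ioi (z * x)) :=
    Antitone.measurable fun x y hxy => measure_mono (Ioi_subset_Ioi (by gcongr))
  have hnonneg (x : ℝ) (hx : 0 < x) :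
      0 ≤ gammaMinPdf ϱ k s x * (1 - stdGammaCdf ϱ (z * x / s)) :=
    mul_nonneg (gammaMinPdf_nonneg hϱ hs x)
      (sub_nonneg.2 (stdGammaCdf_le_one hϱ (by positivity)))
  have hmeas : Measurable fun x => gammaMinPdf ϱ k s x * (1 - stdGammaCdf ϱ (z * x / s)) :=
    measurable_gammaMinPdf.mul ((continuous_stdGammaCdf.measurable.comp (by fun_prop)).const_sub 1)
  rw [integral_eq_lintegral_of_nonneg_ae (ae_restrict_of_forall_mem measurableSet_Ioi hnonneg)
    hmeas.aestronglyMeasurable, gammaMinMeasure, lintegral_withDensity_eq_lintegral_mul _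
    measurable_gammaMinPdf.ennreal_ofReal hsurv, ← lintegral_indicator measurableSet_Ioi]
  congr 1
  refine lintegral_congr fun x => ?_
  rcases le_or_gt x 0 with hx | hx
  · simp [gammaMinPdf, gammaIntPdf, hx.not_gt]
  · rw [indicator_of_mem (mem_Ioi.2 hx), Pi.mul_apply, gammaIntMeasure_Ioi hϱ hs (by positivity),
      ← ENNReal.ofReal_mul (gammaMinPdf_nonneg hϱ hs x), mul_div_assoc]

end Integrals

/-- For `n ≥ 2` i.i.d. Gamma(ϱ, ς²) random variables with integer shape `ϱ ≥ 1` and scale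
`s = ς² > 0`, letting `Fρ` be the CDF of Gamma(ϱ, 1) and `Finv` its inverse on `(0, 1)`,
for every `z ≥ 1`,
`P(γ_n / γ_(1) > z) = (n−1) ∫₀¹ (1 − Fρ(z Fρ⁻¹(1 − w))) w^(n−2) dw`;
in particular this probability does not depend on the scale `ς²`. -/
theorem prob_ratio_gt_z_eq_scale_free_integral
    {Ω : Type*} [MeasurableSpace Ω] (μ : Measure Ω) [IsProbabilityMeasure μ]
    (n ϱ : ℕ) (hn : 2 ≤ n) (hϱ : 1 ≤ ϱ)
    (s : ℝ) (hs : 0 < s)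
    (γ : Fin n → Ω → ℝ) (hm : ∀ i, Measurable (γ i))
    (hindep : iIndepFun γ μ)
    (hlaw : ∀ i, Measure.map (γ i) μ = gammaIntMeasure ϱ s)
    (Fρ : ℝ → ℝ)
    (hFρ : ∀ x, Fρ x = (1 / (Nat.factorial (ϱ - 1) : ℝ)) *
      ∫ t in (0 : ℝ)..x, t ^ (ϱ - 1) * Real.exp (-t))
    (Finv : ℝ → ℝ)
    (hFinv : ∀ w ∈ Ioo (0 : ℝ) 1, 0 < Finv w ∧ Fρ (Finv w) = w)
    (z : ℝ) (hz : 1 ≤ z) :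
    (μ {ω | z < γ ⟨n - 1, by omega⟩ ω / ⨅ i, γ i ω}).toReal =
      ((n : ℝ) - 1) *
        ∫ w in Ioo (0 : ℝ) 1, (1 - Fρ (z * Finv (1 - w))) * w ^ (n - 2) := by
  obtain rfl : Fρ = stdGammaCdf ϱ :=
    funext fun x => (hFρ x).trans (stdGammaCdf_eq_one_div_factorial_mul ϱ x).symm
  set N : Fin n := ⟨n - 1, by omega⟩
  have hJ : (Finset.univ.erase N).Nonempty := ⟨⟨0, by omega⟩, by simp [N, Fin.ext_iff]; omega⟩
  set M := (Finset.univ.erase N).inf' hJ γ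
  have hM : Measurable M := Finset.measurable_inf' hJ fun i _ => hm i
  have hMN : IndepFun M (γ N) μ :=
    hindep.indepFun_finset_inf'_of_notMem hm hJ (Finset.notMem_erase N _)
  have hcard : (Finset.univ.erase N).card = n - 1 := by simp
  have hpos : ∀ᵐ ω ∂μ, ∀ i, 0 < γ i ω := ae_all_iff.2 fun i =>
    ae_of_ae_map (hm i).aemeasurable (hlaw i ▸ ae_pos_gammaIntMeasure)
  have hevent : {ω | z < γ N ω / ⨅ i, γ i ω} =ᵐ[μ] {ω | z * M ω < γ N ω} := by
    filter_upwards [hpos] with ω hω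
    simp only [M, Finset.inf'_apply]
    exact propext (lt_div_iInf_iff_mul_inf'_erase_lt hω N hJ hz)
  calc (μ {ω | z < γ N ω / ⨅ i, γ i ω}).toReal = (μ {ω | z * M ω < γ N ω}).toReal := by
        rw [measure_congr hevent]
    _ = (∫⁻ x, gammaIntMeasure ϱ s (Ioi (z * x)) ∂gammaMinMeasure ϱ (n - 1) s).toReal := by
        rw [hMN.measure_mul_lt_eq_lintegral hM (hm N), hlaw N,
          map_inf'_eq_gammaMinMeasure hϱ hs hm hindep hlaw hJ, hcard]
    _ = ∫ x in Ioi 0, gammaMinPdf ϱ (n - 1) s x * (1 - stdGammaCdf ϱ (z * x / s)) :=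
        toReal_lintegral_gammaIntMeasure_Ioi_mul hϱ hs (by linarith)
    _ = _ := by
        rw [integral_gammaMinPdf_mul_eq hϱ hs hFinv, Nat.cast_sub (by omega), Nat.cast_one,
          Nat.sub_sub]
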